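/- arXiv:1804.10449 — 2 statements merged into one kernel-verified Lean document; each statement's English description precedes it below -/
import Mathlib

section
/- Let α, β, γ ∈ (0, π) with α ≠ β, and let p(γ) be the γ-projection of ⟦0,1⟧ (the intersection of 0 + ℝ·exp(iα) and 1 + ℝ·exp(iβ)). Then p(γ) = sin(α−γ)·sin(β) / (sin(α−β)·sin(γ)). -/
open Real Complex Set

/-- The `θ`-projection of `z`: the unique real `x` with `z ∈ x + ℝ·exp(iθ)`
(for `θ ∈ (0,π)`); explicitly `x = Re z − Im z · cos θ / sin θ`. -/
noncomputable def proj (θ : ℝ) (z : ℂ) : ℝ := z.re - z.im * Real.cos θ / Real.sin θ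

/-- `inter α β r s` is the (unique, for distinct `α β ∈ (0,π)`) complex number
with `α`-projection `r` and `β`-projection `s`, i.e. `⟦r,s⟧_{α,β}`. -/
noncomputable def inter (α β r s : ℝ) : ℂ :=
  Classical.epsilon fun z : ℂ => proj α z = r ∧ proj β z = s

/-- The line through `z` with slope (angle) `θ`. -/
def lineThru (z : ℂ) (θ : ℝ) : Set ℂ := {w | ∃ t : ℝ, w = z + t * Complex.exp (θ * Complex.I)}

/-- The recursively defined stages of the origami set. -/
def origamiStep (U : Set ℝ) : ℕ → Set ℂ
  | 0 => {0, 1}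
  | k + 1 => {w | ∃ z ∈ origamiStep U k, ∃ z' ∈ origamiStep U k,
      ∃ γ ∈ U, ∃ γ' ∈ U, γ ≠ γ' ∧ w ∈ lineThru z γ ∧ w ∈ lineThru z' γ'}

/-- The origami set `M(U)`. -/
def origami (U : Set ℝ) : Set ℂ := ⋃ k, origamiStep U k

/-- The real part `M_ℝ = M(U) ∩ ℝ`, viewed as a set of reals. -/
def origamiR (U : Set ℝ) : Set ℝ := {x : ℝ | (x : ℂ) ∈ origami U}

/-! Writing `z = x + iy`, the condition `proj θ z = r` is the linear equation
`L_θ(z) = r sin θ` with `L_θ(z) = x sin θ - y cos θ`. The sine subtraction formula gives the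
relation `sin (α - β) L_γ = sin (γ - β) L_α + sin (α - γ) L_β`, which expresses the
`γ`-projection through the `α`- and `β`-projections; the point `inter α β r s` exists by
Cramer's rule, the determinant of the system being `-sin (α - β)`. -/

lemma proj_mul_sin {θ : ℝ} (hθ : Real.sin θ ≠ 0) (z : ℂ) :
    proj θ z * Real.sin θ = z.re * Real.sin θ - z.im * Real.cos θ := by
  unfold proj
  field_simp

lemma sin_sub_ne_zero_of_mem_Ioo {α β : ℝ} (hα : α ∈ Ioo 0 π) (hβ : β ∈ Ioo 0 π)
    (hαβ : α ≠ β) : Real.sin (α - β) ≠ 0 := by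
  rw [Ne, Real.sin_eq_zero_iff_of_lt_of_lt (by linarith [hα.1, hβ.2]) (by linarith [hα.2, hβ.1]),
    sub_eq_zero]
  exact hαβ

lemma exists_proj_eq_proj_eq {α β : ℝ} (hα : Real.sin α ≠ 0) (hβ : Real.sin β ≠ 0)
    (hαβ : Real.sin (α - β) ≠ 0) (r s : ℝ) : ∃ z : ℂ, proj α z = r ∧ proj β z = s := by
  refine ⟨⟨(r * Real.sin α * Real.cos β - s * Real.sin β * Real.cos α) / Real.sin (α - β),
    (r - s) * Real.sin α * Real.sin β / Real.sin (α - β)⟩, ?_, ?_⟩ <;>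
  · simp only [proj]
    field_simp
    rw [Real.sin_sub]
    ring

lemma proj_inter {α β : ℝ} (hα : Real.sin α ≠ 0) (hβ : Real.sin β ≠ 0)
    (hαβ : Real.sin (α - β) ≠ 0) (r s : ℝ) :
    proj α (inter α β r s) = r ∧ proj β (inter α β r s) = s :=
  Classical.epsilon_spec (exists_proj_eq_proj_eq hα hβ hαβ r s)

lemma proj_eq_of_proj_eq_of_proj_eq {α β γ : ℝ} (hα : Real.sin α ≠ 0) (hβ : Real.sin β ≠ 0)
    (hγ : Real.sin γ ≠ 0) (hαβ : Real.sin (α - β) ≠ 0) {z : ℂ} {r s : ℝ}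
    (hr : proj α z = r) (hs : proj β z = s) :
    proj γ z = (r * Real.sin α * Real.sin (γ - β) + s * Real.sin β * Real.sin (α - γ)) /
      (Real.sin (α - β) * Real.sin γ) := by
  have eα := proj_mul_sin hα z
  have eβ := proj_mul_sin hβ z
  have eγ := proj_mul_sin hγ z
  rw [hr] at eα
  rw [hs] at eβ
  rw [eq_div_iff (mul_ne_zero hαβ hγ)]
  linear_combination (norm := (simp only [Real.sin_sub]; ring))
    Real.sin (α - β) * eγ - Real.sin (γ - β) * eα - Real.sin (α - γ) * eβ

theorem p_gamma_explicit (α β γ : ℝ) (hα : α ∈ Set.Ioo 0 Real.pi)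
    (hβ : β ∈ Set.Ioo 0 Real.pi) (hγ : γ ∈ Set.Ioo 0 Real.pi) (hαβ : α ≠ β) :
    proj γ (inter α β 0 1) =
      Real.sin (α - γ) * Real.sin β / (Real.sin (α - β) * Real.sin γ) := by
  have hsα := (Real.sin_pos_of_mem_Ioo hα).ne'
  have hsβ := (Real.sin_pos_of_mem_Ioo hβ).ne'
  have hsγ := (Real.sin_pos_of_mem_Ioo hγ).ne'
  have hsαβ := sin_sub_ne_zero_of_mem_Ioo hα hβ hαβ
  obtain ⟨h0, h1⟩ := proj_inter hsα hsβ hsαβ 0 1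
  rw [proj_eq_of_proj_eq_of_proj_eq hsα hsβ hsγ hsαβ h0 h1]
  ring
end

section
/- Let U ⊆ [0, π) with 0 ∈ U and |U| ≥ 3, fix distinct α, β ∈ U \ {0}, and set e = ⟦0,1⟧. Then the following are equivalent: (a) the origami set M(U) is a subring of ℂ; (b) e satisfies a monic quadratic polynomial with coefficients in M_ℝ; (c) sin²β/sin²(α−β) ∈ M_ℝ and 2·cos(α)·sin(β)/sin(α−β) ∈ M_ℝ; (d) sin²α/sin²(α−β) ∈ M_ℝ and sin²β/sin²(α−β) ∈ M_ℝ; (e) e·(1−e) ∈ M(U). -/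
/-!
Since `α, β ∈ (0, π)` are distinct, a point `z ∈ ℂ` is determined by its projections along the
slopes `α` and `β`, and `z = proj α z + (proj β z - proj α z) · e` with `e = ⟦0,1⟧`. A point lies
in `M(U)` exactly when both projections lie in `M_ℝ` (intersect with the real axis, slope
`0 ∈ U`), and `M_ℝ` is a subring of `ℝ`; hence `M(U) = M_ℝ + M_ℝ · e`. This set is a ring iff
`e² ∈ M_ℝ + M_ℝ · e`. As `e` is not real, its only monic real quadratic is
`X² - 2 Re e · X + |e|²`, and `e = -(sin β / sin (α - β)) · exp (iα)` gives
`-2 Re e = 2 cos α sin β / sin (α - β)` and `|e|² = sin² β / sin² (α - β)`; finally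
`sin² α = sin² (α - β) + 2 cos α sin β sin (α - β) + sin² β` links (c) and (d).
-/

open Real Complex Set

theorem mem_lineThru_comm {z w : ℂ} {θ : ℝ} : w ∈ lineThru z θ ↔ z ∈ lineThru w θ := by
  have key : ∀ {z w : ℂ}, w ∈ lineThru z θ → z ∈ lineThru w θ := by
    rintro z w ⟨t, rfl⟩
    exact ⟨-t, by push_cast; ring⟩
  exact ⟨key, key⟩

theorem add_ofReal_mem_lineThru_zero (z : ℂ) (r : ℝ) : z + r ∈ lineThru z 0 :=
  ⟨r, by simp⟩

theorem ofReal_mul_mem_lineThru {z w : ℂ} {θ : ℝ} (u : ℝ) (h : w ∈ lineThru z θ) :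
    (u : ℂ) * w ∈ lineThru (u * z) θ := by
  obtain ⟨t, rfl⟩ := h
  exact ⟨u * t, by push_cast; ring⟩

section Origami

variable {U : Set ℝ}

theorem origamiStep_subset_succ (hU : U.Nontrivial) (k : ℕ) :
    origamiStep U k ⊆ origamiStep U (k + 1) := by
  induction k with
  | zero =>
    obtain ⟨γ, hγ, γ', hγ', hne⟩ := hU
    exact fun w hw => ⟨w, hw, w, hw, γ, hγ, γ', hγ', hne, ⟨0, by simp⟩, ⟨0, by simp⟩⟩
  | succ k ih =>
    rintro w ⟨z, hz, z', hz', γ, hγ, γ', hγ', hne, h, h'⟩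
    exact ⟨z, ih hz, z', ih hz', γ, hγ, γ', hγ', hne, h, h'⟩

theorem zero_mem_origami : (0 : ℂ) ∈ origami U :=
  mem_iUnion_of_mem 0 (by simp [origamiStep])

theorem one_mem_origami : (1 : ℂ) ∈ origami U :=
  mem_iUnion_of_mem 0 (by simp [origamiStep])

theorem mem_origami_of_mem_lineThru {z z' w : ℂ} {γ γ' : ℝ} (hz : z ∈ origami U)
    (hz' : z' ∈ origami U) (hγ : γ ∈ U) (hγ' : γ' ∈ U) (hne : γ ≠ γ')
    (hw : w ∈ lineThru z γ) (hw' : w ∈ lineThru z' γ') : w ∈ origami U := by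
  have hmono : Monotone (origamiStep U) :=
    monotone_nat_of_le_succ (origamiStep_subset_succ ⟨γ, hγ, γ', hγ', hne⟩)
  obtain ⟨k, hk⟩ := mem_iUnion.1 hz
  obtain ⟨k', hk'⟩ := mem_iUnion.1 hz'
  exact mem_iUnion_of_mem (max k k' + 1) ⟨z, hmono (le_max_left k k') hk,
    z', hmono (le_max_right k k') hk', γ, hγ, γ', hγ', hne, hw, hw'⟩

/-- Scaling by a real `u` preserves slopes, so it maps each stage into `M(U)` once `u ∈ M(U)`. -/
theorem ofReal_mul_mem_origami {u : ℝ} {z : ℂ} (hu : (u : ℂ) ∈ origami U)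
    (hz : z ∈ origami U) : (u : ℂ) * z ∈ origami U := by
  obtain ⟨k, hk⟩ := mem_iUnion.1 hz
  clear hz
  induction k generalizing z with
  | zero =>
    rcases hk with rfl | rfl
    · simpa using zero_mem_origami
    · simpa using hu
  | succ k ih =>
    obtain ⟨z₁, hz₁, z₂, hz₂, γ, hγ, γ', hγ', hne, h, h'⟩ := hk
    exact mem_origami_of_mem_lineThru (ih hz₁) (ih hz₂) hγ hγ' hne
      (ofReal_mul_mem_lineThru u h) (ofReal_mul_mem_lineThru u h')

end Origami

section Projection

theorem proj_add (γ : ℝ) (z w : ℂ) : proj γ (z + w) = proj γ z + proj γ w := by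
  simp only [proj, add_re, add_im]; ring

theorem proj_ofReal_mul (γ u : ℝ) (z : ℂ) : proj γ (u * z) = u * proj γ z := by
  simp only [proj, re_ofReal_mul, im_ofReal_mul]; ring

@[simp]
theorem proj_ofReal (γ r : ℝ) : proj γ r = r := by
  simp [proj]

variable {α β γ : ℝ}

theorem proj_ofReal_mul_exp (hs : Real.sin γ ≠ 0) (t θ : ℝ) :
    proj γ (t * exp (θ * I)) = t * Real.sin (γ - θ) / Real.sin γ := by
  simp only [proj, re_ofReal_mul, im_ofReal_mul, exp_ofReal_mul_I_re, exp_ofReal_mul_I_im,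
    Real.sin_sub]
  field_simp

theorem mem_lineThru_proj (hs : Real.sin γ ≠ 0) (z : ℂ) : z ∈ lineThru (proj γ z) γ := by
  refine ⟨z.im / Real.sin γ, Complex.ext ?_ ?_⟩
  · simp only [proj, add_re, ofReal_re, re_ofReal_mul, exp_ofReal_mul_I_re]
    field_simp
    ring
  · simp only [add_im, ofReal_im, im_ofReal_mul, exp_ofReal_mul_I_im]
    field_simp
    ring

section TwoSlopes

variable (hsα : Real.sin α ≠ 0) (hsβ : Real.sin β ≠ 0) (hd : Real.sin (α - β) ≠ 0)
include hsα hsβ hd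

theorem eq_of_proj_eq {z w : ℂ} (hα : proj α z = proj α w) (hβ : proj β z = proj β w) :
    z = w := by
  simp only [proj] at hα hβ
  field_simp at hα hβ
  rw [Real.sin_sub] at hd
  have him : z.im = w.im := by
    apply mul_left_cancel₀ hd
    linear_combination Real.sin β * hα - Real.sin α * hβ
  refine Complex.ext ?_ him
  apply mul_left_cancel₀ hsα
  linear_combination hα + Real.cos α * him

theorem inter_eq {r s : ℝ} {z : ℂ} (hr : proj α z = r) (hs : proj β z = s) :
    inter α β r s = z := by
  obtain ⟨h₁, h₂⟩ := Classical.epsilon_spec (p := fun w : ℂ => proj α w = r ∧ proj β w = s)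
    ⟨z, hr, hs⟩
  exact eq_of_proj_eq hsα hsβ hd (h₁.trans hr.symm) (h₂.trans hs.symm)

theorem proj_neg_sin_div_mul_exp :
    proj α (((-(Real.sin β / Real.sin (α - β)) : ℝ) : ℂ) * exp (α * I)) = 0 ∧
      proj β (((-(Real.sin β / Real.sin (α - β)) : ℝ) : ℂ) * exp (α * I)) = 1 := by
  have hneg : Real.sin (β - α) = -Real.sin (α - β) := by rw [← neg_sub, Real.sin_neg]
  rw [proj_ofReal_mul_exp hsα, proj_ofReal_mul_exp hsβ, sub_self, Real.sin_zero, hneg]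
  constructor
  · ring
  · field_simp

theorem inter_zero_one_eq :
    inter α β 0 1 = ((-(Real.sin β / Real.sin (α - β)) : ℝ) : ℂ) * exp (α * I) :=
  inter_eq hsα hsβ hd (proj_neg_sin_div_mul_exp hsα hsβ hd).1
    (proj_neg_sin_div_mul_exp hsα hsβ hd).2

theorem proj_inter_zero_one : proj α (inter α β 0 1) = 0 ∧ proj β (inter α β 0 1) = 1 := by
  rw [inter_zero_one_eq hsα hsβ hd]
  exact proj_neg_sin_div_mul_exp hsα hsβ hd

theorem eq_proj_add_mul_inter_zero_one (z : ℂ) :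
    z = proj α z + (proj β z - proj α z : ℝ) * inter α β 0 1 := by
  obtain ⟨h₁, h₂⟩ := proj_inter_zero_one hsα hsβ hd
  apply eq_of_proj_eq hsα hsβ hd <;>
    simp only [proj_add, proj_ofReal_mul, proj_ofReal, h₁, h₂] <;> ring

end TwoSlopes

end Projection

theorem sin_ne_zero_of_mem_Ico {γ : ℝ} (hγ : γ ∈ Ico 0 π) (hγ0 : γ ≠ 0) : Real.sin γ ≠ 0 :=
  fun h => hγ0 ((Real.sin_eq_zero_iff_of_lt_of_lt (by linarith [hγ.1, pi_pos]) hγ.2).1 h)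

theorem sin_sub_ne_zero_of_mem_Ico {α β : ℝ} (hα : α ∈ Ico 0 π) (hβ : β ∈ Ico 0 π)
    (hαβ : α ≠ β) : Real.sin (α - β) ≠ 0 := fun h =>
  hαβ <| sub_eq_zero.1 <| (Real.sin_eq_zero_iff_of_lt_of_lt (by linarith [hα.1, hβ.2])
    (by linarith [hα.2, hβ.1])).1 h

theorem sin_sq_div_sin_sub_sq {α β : ℝ} (hd : Real.sin (α - β) ≠ 0) :
    Real.sin α ^ 2 / Real.sin (α - β) ^ 2 =
      1 + 2 * (Real.cos α * Real.sin β / Real.sin (α - β)) +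
        Real.sin β ^ 2 / Real.sin (α - β) ^ 2 := by
  have key : Real.sin α ^ 2 = Real.sin (α - β) ^ 2 +
      2 * Real.cos α * Real.sin β * Real.sin (α - β) + Real.sin β ^ 2 := by
    rw [Real.sin_sub]
    linear_combination (-Real.sin α ^ 2) * Real.sin_sq_add_cos_sq β +
      Real.sin β ^ 2 * Real.sin_sq_add_cos_sq α
  rw [key]
  field_simp

theorem sq_add_mul_add_eq_zero_iff_of_im_ne_zero {z : ℂ} (hz : z.im ≠ 0) {b c : ℝ} :
    z ^ 2 + b * z + c = 0 ↔ b = -2 * z.re ∧ c = normSq z := by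
  have hroot : z ^ 2 + ((-2 * z.re : ℝ) : ℂ) * z + (normSq z : ℂ) = 0 := by
    apply Complex.ext <;> simp [sq, normSq_apply] <;> ring
  constructor
  · intro h
    have hlin : ((b + 2 * z.re : ℝ) : ℂ) * z + ((c - normSq z : ℝ) : ℂ) = 0 := by
      push_cast at hroot ⊢
      linear_combination h - hroot
    have him := congrArg Complex.im hlin
    simp only [im_ofReal_mul, add_im, ofReal_im, add_zero, zero_im, mul_eq_zero, hz,
      or_false] at him
    rw [him, ofReal_zero, zero_mul, zero_add, ofReal_eq_zero] at hlin
    constructor <;> linarith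
  · rintro ⟨rfl, rfl⟩
    exact hroot

theorem exists_subring_coe_eq_of_sq_add_mul_add_eq_zero (R : Subring ℝ) {z : ℂ} {b c : ℝ}
    (hb : b ∈ R) (hc : c ∈ R) (hz : z ^ 2 + b * z + c = 0) :
    ∃ S : Subring ℂ, (S : Set ℂ) = {w | ∃ p ∈ R, ∃ q ∈ R, w = p + q * z} := by
  refine ⟨{
    carrier := {w | ∃ p ∈ R, ∃ q ∈ R, w = p + q * z}
    zero_mem' := ⟨0, R.zero_mem, 0, R.zero_mem, by simp⟩
    one_mem' := ⟨1, R.one_mem, 0, R.zero_mem, by simp⟩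
    add_mem' := ?add
    neg_mem' := ?neg
    mul_mem' := ?mul }, rfl⟩
  case add =>
    rintro _ _ ⟨p, hp, q, hq, rfl⟩ ⟨p', hp', q', hq', rfl⟩
    exact ⟨p + p', R.add_mem hp hp', q + q', R.add_mem hq hq', by push_cast; ring⟩
  case neg =>
    rintro _ ⟨p, hp, q, hq, rfl⟩
    exact ⟨-p, R.neg_mem hp, -q, R.neg_mem hq, by push_cast; ring⟩
  case mul =>
    rintro _ _ ⟨p, hp, q, hq, rfl⟩ ⟨p', hp', q', hq', rfl⟩
    -- reduce `q q' z²` using `z² = -b z - c`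
    refine ⟨p * p' - c * (q * q'), R.sub_mem (R.mul_mem hp hp') (R.mul_mem hc (R.mul_mem hq hq')),
      p * q' + q * p' - b * (q * q'),
      R.sub_mem (R.add_mem (R.mul_mem hp hq') (R.mul_mem hq hp')) (R.mul_mem hb (R.mul_mem hq hq')),
      ?_⟩
    push_cast
    linear_combination ((q : ℂ) * q') * hz

section InterZeroOne

variable {α β : ℝ} (hsα : Real.sin α ≠ 0) (hsβ : Real.sin β ≠ 0) (hd : Real.sin (α - β) ≠ 0)
include hsα hsβ hd

theorem sq_add_mul_add_inter_zero_one_eq_zero_iff {b c : ℝ} :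
    inter α β 0 1 ^ 2 + b * inter α β 0 1 + c = 0 ↔
      b = 2 * (Real.cos α * Real.sin β / Real.sin (α - β)) ∧
        c = Real.sin β ^ 2 / Real.sin (α - β) ^ 2 := by
  have him : (inter α β 0 1).im ≠ 0 := by
    rw [inter_zero_one_eq hsα hsβ hd, im_ofReal_mul, exp_ofReal_mul_I_im]
    exact mul_ne_zero (neg_ne_zero.2 (div_ne_zero hsβ hd)) hsα
  rw [sq_add_mul_add_eq_zero_iff_of_im_ne_zero him, inter_zero_one_eq hsα hsβ hd,
    re_ofReal_mul, exp_ofReal_mul_I_re, normSq_mul, normSq_ofReal, normSq_eq_norm_sq (Complex.exp _), norm_exp_ofReal_mul_I]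
  constructor <;> rintro ⟨rfl, rfl⟩ <;> constructor <;> ring

end InterZeroOne

section OrigamiProjection

variable {U : Set ℝ} {α β γ : ℝ}

theorem proj_mem_origamiR (h0 : (0 : ℝ) ∈ U) (hγ : γ ∈ U) (hs : Real.sin γ ≠ 0) {z : ℂ}
    (hz : z ∈ origami U) : proj γ z ∈ origamiR U := by
  have hγ0 : γ ≠ 0 := by rintro rfl; exact hs Real.sin_zero
  refine mem_origami_of_mem_lineThru hz zero_mem_origami hγ h0 hγ0
    (mem_lineThru_comm.1 (mem_lineThru_proj hs z)) ?_
  simpa using add_ofReal_mem_lineThru_zero 0 (proj γ z)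

theorem mem_origami_of_proj_mem (hα : α ∈ U) (hβ : β ∈ U) (hαβ : α ≠ β)
    (hsα : Real.sin α ≠ 0) (hsβ : Real.sin β ≠ 0) {z : ℂ} (h₁ : proj α z ∈ origamiR U)
    (h₂ : proj β z ∈ origamiR U) : z ∈ origami U :=
  mem_origami_of_mem_lineThru h₁ h₂ hα hβ hαβ (mem_lineThru_proj hsα z) (mem_lineThru_proj hsβ z)

variable (h0 : (0 : ℝ) ∈ U) (hα : α ∈ U) (hβ : β ∈ U) (hsα : Real.sin α ≠ 0)
  (hsβ : Real.sin β ≠ 0) (hd : Real.sin (α - β) ≠ 0)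
include h0 hα hβ hsα hsβ hd

/-- The point `z` with projections `u, v` is in `M(U)`; sliding it horizontally until its
`β`-projection becomes `w` moves its `α`-projection to `u + w - v`. -/
theorem add_sub_mem_origamiR {u v w : ℝ} (hu : u ∈ origamiR U) (hv : v ∈ origamiR U)
    (hw : w ∈ origamiR U) : u + w - v ∈ origamiR U := by
  have hαβ : α ≠ β := by rintro rfl; simp at hd
  obtain ⟨he₁, he₂⟩ := proj_inter_zero_one hsα hsβ hd
  set z : ℂ := u + (v - u : ℝ) * inter α β 0 1
  have hz₁ : proj α z = u := by simp only [z, proj_add, proj_ofReal_mul, proj_ofReal, he₁]; ring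
  have hz₂ : proj β z = v := by simp only [z, proj_add, proj_ofReal_mul, proj_ofReal, he₂]; ring
  have hz : z ∈ origami U := mem_origami_of_proj_mem hα hβ hαβ hsα hsβ (hz₁ ▸ hu) (hz₂ ▸ hv)
  have hp₂ : proj β (z + (w - v : ℝ)) = w := by rw [proj_add, proj_ofReal, hz₂]; ring
  have hβ0 : (0 : ℝ) ≠ β := by rintro rfl; exact hsβ Real.sin_zero
  have hp : z + (w - v : ℝ) ∈ origami U := by
    have hline := mem_lineThru_proj hsβ (z + (w - v : ℝ))
    rw [hp₂] at hline
    exact mem_origami_of_mem_lineThru hz hw h0 hβ hβ0 (add_ofReal_mem_lineThru_zero z _) hline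
  have hp₁ : proj α (z + (w - v : ℝ)) = u + w - v := by rw [proj_add, proj_ofReal, hz₁]; ring
  exact hp₁ ▸ proj_mem_origamiR h0 hα hsα hp

theorem exists_subring_coe_eq_origamiR : ∃ R : Subring ℝ, (R : Set ℝ) = origamiR U := by
  have hzero : (0 : ℝ) ∈ origamiR U := by simpa [origamiR] using zero_mem_origami
  exact ⟨{
    carrier := origamiR U
    zero_mem' := hzero
    one_mem' := by simpa [origamiR] using one_mem_origami
    add_mem' := fun hu hv => by
      simpa using add_sub_mem_origamiR h0 hα hβ hsα hsβ hd hu hzero hv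
    neg_mem' := fun hu => by
      simpa using add_sub_mem_origamiR h0 hα hβ hsα hsβ hd hzero hu hzero
    mul_mem' := fun hu hv => by simpa [origamiR] using ofReal_mul_mem_origami hu hv }, rfl⟩

theorem origami_eq_setOf {R : Subring ℝ} (hR : (R : Set ℝ) = origamiR U) :
    origami U = {z | ∃ p ∈ R, ∃ q ∈ R, z = p + q * inter α β 0 1} := by
  have hαβ : α ≠ β := by rintro rfl; simp at hd
  obtain ⟨he₁, he₂⟩ := proj_inter_zero_one hsα hsβ hd
  ext z
  constructor
  · intro hz
    have h₁ : proj α z ∈ R := by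
      rw [← SetLike.mem_coe, hR]; exact proj_mem_origamiR h0 hα hsα hz
    have h₂ : proj β z ∈ R := by
      rw [← SetLike.mem_coe, hR]; exact proj_mem_origamiR h0 hβ hsβ hz
    exact ⟨_, h₁, _, R.sub_mem h₂ h₁, eq_proj_add_mul_inter_zero_one hsα hsβ hd z⟩
  · rintro ⟨p, hp, q, hq, rfl⟩
    apply mem_origami_of_proj_mem hα hβ hαβ hsα hsβ
    · simpa [proj_add, proj_ofReal_mul, he₁, ← hR] using hp
    · simpa [proj_add, proj_ofReal_mul, he₂, ← hR] using R.add_mem hp hq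

end OrigamiProjection

theorem origami_ring_tfae_general (U : Set ℝ) (hU : U ⊆ Set.Ico 0 Real.pi) (h0 : (0 : ℝ) ∈ U)
    (α β : ℝ) (hα : α ∈ U) (hβ : β ∈ U)
    (hα0 : α ≠ 0) (hβ0 : β ≠ 0) (hαβ : α ≠ β) :
    List.TFAE [
      (∃ R : Subring ℂ, (R : Set ℂ) = origami U),
      (∃ b c : ℝ, b ∈ origamiR U ∧ c ∈ origamiR U ∧
        (inter α β 0 1) ^ 2 + (b : ℂ) * inter α β 0 1 + (c : ℂ) = 0),
      (Real.sin β ^ 2 / Real.sin (α - β) ^ 2 ∈ origamiR U ∧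
        2 * (Real.cos α * Real.sin β / Real.sin (α - β)) ∈ origamiR U),
      (Real.sin α ^ 2 / Real.sin (α - β) ^ 2 ∈ origamiR U ∧
        Real.sin β ^ 2 / Real.sin (α - β) ^ 2 ∈ origamiR U),
      (inter α β 0 1 * (1 - inter α β 0 1) ∈ origami U)
    ] := by
  have hsα := sin_ne_zero_of_mem_Ico (hU hα) hα0
  have hsβ := sin_ne_zero_of_mem_Ico (hU hβ) hβ0
  have hd := sin_sub_ne_zero_of_mem_Ico (hU hα) (hU hβ) hαβ
  obtain ⟨R, hR⟩ := exists_subring_coe_eq_origamiR h0 hα hβ hsα hsβ hd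
  rw [origami_eq_setOf h0 hα hβ hsα hsβ hd hR, ← hR]
  simp only [SetLike.mem_coe]
  tfae_have 1 → 5 := by
    rintro ⟨S, hS⟩
    have he : inter α β 0 1 ∈ S := by
      rw [← SetLike.mem_coe, hS]; exact ⟨0, R.zero_mem, 1, R.one_mem, by simp⟩
    rw [← hS]
    exact S.mul_mem he (S.sub_mem S.one_mem he)
  tfae_have 5 → 2 := by
    rintro ⟨p, hp, q, hq, h⟩
    exact ⟨q - 1, p, R.sub_mem hq R.one_mem, hp, by push_cast; linear_combination -h⟩
  tfae_have 2 ↔ 3 := by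
    simp only [sq_add_mul_add_inter_zero_one_eq_zero_iff hsα hsβ hd]
    constructor
    · rintro ⟨b, c, hb, hc, rfl, rfl⟩
      exact ⟨hc, hb⟩
    · rintro ⟨hc, hb⟩
      exact ⟨_, _, hb, hc, rfl, rfl⟩
  tfae_have 3 ↔ 4 := by
    rw [sin_sq_div_sin_sub_sq hd]
    constructor
    · rintro ⟨hC, hB⟩
      exact ⟨R.add_mem (R.add_mem R.one_mem hB) hC, hC⟩
    · rintro ⟨hA, hC⟩
      refine ⟨hC, ?_⟩
      convert R.sub_mem (R.sub_mem hA R.one_mem) hC using 1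
      ring
  tfae_have 2 → 1 := fun ⟨_, _, hb, hc, h⟩ =>
    exists_subring_coe_eq_of_sq_add_mul_add_eq_zero R hb hc h
  tfae_finish

theorem origami_ring_tfae (U : Set ℝ) (hU : U ⊆ Set.Ico 0 Real.pi) (h0 : (0 : ℝ) ∈ U)
    (hcard : 3 ≤ U.encard) (α β : ℝ) (hα : α ∈ U) (hβ : β ∈ U)
    (hα0 : α ≠ 0) (hβ0 : β ≠ 0) (hαβ : α ≠ β) :
    List.TFAE [
      (∃ R : Subring ℂ, (R : Set ℂ) = origami U),
      (∃ b c : ℝ, b ∈ origamiR U ∧ c ∈ origamiR U ∧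
        (inter α β 0 1) ^ 2 + (b : ℂ) * inter α β 0 1 + (c : ℂ) = 0),
      (Real.sin β ^ 2 / Real.sin (α - β) ^ 2 ∈ origamiR U ∧
        2 * (Real.cos α * Real.sin β / Real.sin (α - β)) ∈ origamiR U),
      (Real.sin α ^ 2 / Real.sin (α - β) ^ 2 ∈ origamiR U ∧
        Real.sin β ^ 2 / Real.sin (α - β) ^ 2 ∈ origamiR U),
      (inter α β 0 1 * (1 - inter α β 0 1) ∈ origami U)
    ] :=
  origami_ring_tfae_general U hU h0 α β hα hβ hα0 hβ0 hαβ
end
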